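/- arXiv:2106.07484 — 5 statements merged into one kernel-verified Lean document; each statement's English description precedes it below -/
import Mathlib

section
/- Let a, b, c > 0 with c < b²/(4a) and let r₋ = (b - √(b² - 4ac))/(2a). Then r₋ ≤ c/b + (c/b) · Σ_{n=1}^∞ (2ac/b²)ⁿ, where the geometric series converges since 2ac/b² < 1. -/
/-!
Rationalizing gives `r₋ = 2c / (b + √(b² - 4ac))`, and the right-hand side sums to
`(c/b) / (1 - 2ac/b²) = cb / (b² - 2ac)`. Cross-multiplying, the inequality becomes
`b² - 4ac ≤ b √(b² - 4ac)`, which holds because `√(b² - 4ac) ≤ b`.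
-/

open Real

theorem add_mul_tsum_geometric_succ {K : Type*} [NormedField K] [CompleteSpace K] {q : K}
    (hq : ‖q‖ < 1) (x : K) :
    x + x * ∑' n : ℕ, q ^ (n + 1) = x / (1 - q) := by
  have hsum : ∑' n : ℕ, q ^ n = 1 + ∑' n : ℕ, q ^ (n + 1) := by
    simpa using (summable_geometric_of_norm_lt_one hq).tsum_eq_zero_add
  rw [← mul_one_add, ← hsum, tsum_geometric_of_norm_lt_one hq, div_eq_mul_inv]

theorem sub_sqrt_discrim_div_eq {a b c : ℝ} (ha : a ≠ 0) (hb : 0 < b)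
    (hdisc : 0 ≤ b ^ 2 - 4 * a * c) :
    (b - √(b ^ 2 - 4 * a * c)) / (2 * a) = 2 * c / (b + √(b ^ 2 - 4 * a * c)) := by
  have hsq := sq_sqrt hdisc
  rw [div_eq_div_iff (by positivity) (by positivity)]
  linear_combination -hsq

theorem le_mul_sqrt_of_le_sq {x b : ℝ} (hx : 0 ≤ x) (hb : 0 ≤ b) (hxb : x ≤ b ^ 2) :
    x ≤ b * √x :=
  calc x = √x * √x := (mul_self_sqrt hx).symm
    _ ≤ b * √x := mul_le_mul_of_nonneg_right ((sqrt_le_left hb).2 hxb) (sqrt_nonneg x)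

theorem two_mul_div_add_sqrt_discrim_le {a b c : ℝ} (hb : 0 < b) (hc : 0 ≤ c)
    (hac : 0 ≤ a * c) (hdisc : 4 * a * c < b ^ 2) :
    2 * c / (b + √(b ^ 2 - 4 * a * c)) ≤ c / b / (1 - 2 * a * c / b ^ 2) := by
  have hsqrt : b ^ 2 - 4 * a * c ≤ b * √(b ^ 2 - 4 * a * c) :=
    le_mul_sqrt_of_le_sq (by linarith) hb.le (by linarith)
  have hrhs : c / b / (1 - 2 * a * c / b ^ 2) = c * b / (b ^ 2 - 2 * a * c) := by
    field_simp
  rw [hrhs, div_le_div_iff₀ (by positivity) (by linarith)]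
  nlinarith [mul_le_mul_of_nonneg_left hsqrt hc]

theorem root_series_bound (a b c : ℝ) (ha : 0 < a) (hb : 0 < b) (hc : 0 < c)
    (hpar : c < b ^ 2 / (4 * a)) :
    (2 * a * c / b ^ 2 < 1) ∧
    (b - Real.sqrt (b ^ 2 - 4 * a * c)) / (2 * a) ≤
      c / b + (c / b) * ∑' n : ℕ, (2 * a * c / b ^ 2) ^ (n + 1) := by
  have hdisc : 4 * a * c < b ^ 2 := (lt_div_iff₀' (by positivity)).1 hpar
  have hq : 2 * a * c / b ^ 2 < 1 := (div_lt_one (by positivity)).2 (by nlinarith)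
  have hq_norm : ‖2 * a * c / b ^ 2‖ < 1 := by
    rwa [Real.norm_of_nonneg (by positivity)]
  refine ⟨hq, ?_⟩
  rw [add_mul_tsum_geometric_succ hq_norm, sub_sqrt_discrim_div_eq ha.ne' hb (by linarith)]
  exact two_mul_div_add_sqrt_discrim_le hb hc.le (by positivity) hdisc
end

section
/- In the setting of the contraction lemma, the map τ₋ ↦ x̂(τ₋) assigning to each τ₋ ∈ [0, τ*] the unique fixed point x̂(τ₋) of T_{τ₋}(x) = x_k + τ₋ · F(t_k + τ₋, x) is Lipschitz continuous, with Lipschitz constant at most (M + τ* L₁)/(ε L₂). -/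
theorem fixed_point_lipschitz_in_step {d : ℕ}
    (δ L₁ L₂ M ε tk tk1 : ℝ) (xk : EuclideanSpace ℝ (Fin d))
    (F : ℝ → EuclideanSpace ℝ (Fin d) → EuclideanSpace ℝ (Fin d))
    (xhat : ℝ → EuclideanSpace ℝ (Fin d))
    (hδ : 0 < δ) (hL₁ : 0 < L₁) (hL₂ : 0 < L₂)
    (hε : 0 < ε) (hεL : ε < 1 / L₂)
    (hdom : tk + min (δ / M) (1 / L₂ - ε) ≤ tk1)
    (hLipT : ∀ t ∈ Set.Icc tk tk1, ∀ t' ∈ Set.Icc tk tk1,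
      ∀ x ∈ Metric.closedBall xk δ, ‖F t x - F t' x‖ ≤ L₁ * |t - t'|)
    (hLipX : ∀ t ∈ Set.Icc tk tk1, ∀ x ∈ Metric.closedBall xk δ,
      ∀ y ∈ Metric.closedBall xk δ, ‖F t x - F t y‖ ≤ L₂ * ‖x - y‖)
    (hM : ∀ t ∈ Set.Icc tk tk1, ∀ x ∈ Metric.closedBall xk δ, ‖F t x‖ ≤ M)
    (hfix : ∀ τm ∈ Set.Icc (0 : ℝ) (min (δ / M) (1 / L₂ - ε)),
      xhat τm ∈ Metric.closedBall xk δ ∧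
      xhat τm = xk + τm • F (tk + τm) (xhat τm)) :
    ∀ τ₁ ∈ Set.Icc (0 : ℝ) (min (δ / M) (1 / L₂ - ε)),
      ∀ τ₂ ∈ Set.Icc (0 : ℝ) (min (δ / M) (1 / L₂ - ε)),
        ‖xhat τ₁ - xhat τ₂‖ ≤
          (M + min (δ / M) (1 / L₂ - ε) * L₁) / (ε * L₂) * |τ₁ - τ₂| := by
  intro τ₁ hτ₁ τ₂ hτ₂
  set τs := min (δ / M) (1 / L₂ - ε) with hτs
  obtain ⟨h1ball, h1eq⟩ := hfix τ₁ hτ₁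
  obtain ⟨h2ball, h2eq⟩ := hfix τ₂ hτ₂
  obtain ⟨h10, h1s⟩ := hτ₁
  obtain ⟨h20, h2s⟩ := hτ₂
  have ht1 : tk + τ₁ ∈ Set.Icc tk tk1 := ⟨by linarith, by linarith⟩
  have ht2 : tk + τ₂ ∈ Set.Icc tk tk1 := ⟨by linarith, by linarith⟩
  set a := F (tk + τ₁) (xhat τ₁) with ha
  set b := F (tk + τ₂) (xhat τ₂) with hb
  have hdiff : xhat τ₁ - xhat τ₂ = (τ₁ - τ₂) • a + τ₂ • (a - b) := by
    rw [h1eq, h2eq]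
    module
  have hMa : ‖a‖ ≤ M := hM _ ht1 _ h1ball
  have hab : ‖a - b‖ ≤ L₁ * |τ₁ - τ₂| + L₂ * ‖xhat τ₁ - xhat τ₂‖ := by
    have e1 : ‖a - F (tk + τ₂) (xhat τ₁)‖ ≤ L₁ * |τ₁ - τ₂| := by
      have := hLipT _ ht1 _ ht2 _ h1ball
      simpa using this
    have e2 : ‖F (tk + τ₂) (xhat τ₁) - b‖ ≤ L₂ * ‖xhat τ₁ - xhat τ₂‖ :=
      hLipX _ ht2 _ h1ball _ h2ball
    calc ‖a - b‖ ≤ ‖a - F (tk + τ₂) (xhat τ₁)‖ + ‖F (tk + τ₂) (xhat τ₁) - b‖ :=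
          norm_sub_le_norm_sub_add_norm_sub _ _ _
      _ ≤ _ := add_le_add e1 e2
  have key : ‖xhat τ₁ - xhat τ₂‖ ≤
      |τ₁ - τ₂| * M + τ₂ * (L₁ * |τ₁ - τ₂| + L₂ * ‖xhat τ₁ - xhat τ₂‖) := by
    calc ‖xhat τ₁ - xhat τ₂‖ = ‖(τ₁ - τ₂) • a + τ₂ • (a - b)‖ := by rw [hdiff]
      _ ≤ ‖(τ₁ - τ₂) • a‖ + ‖τ₂ • (a - b)‖ := norm_add_le _ _
      _ = |τ₁ - τ₂| * ‖a‖ + τ₂ * ‖a - b‖ := by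
          rw [norm_smul, norm_smul, Real.norm_eq_abs, Real.norm_eq_abs, abs_of_nonneg h20]
      _ ≤ |τ₁ - τ₂| * M + τ₂ * (L₁ * |τ₁ - τ₂| + L₂ * ‖xhat τ₁ - xhat τ₂‖) := by
          gcongr
  have hεL₂ : 0 < ε * L₂ := mul_pos hε hL₂
  rw [div_mul_eq_mul_div, le_div_iff₀ hεL₂]
  have hτ2L : τ₂ * L₂ ≤ 1 - ε * L₂ := by
    have : τ₂ ≤ 1 / L₂ - ε := le_trans h2s (min_le_right _ _)
    have h := mul_le_mul_of_nonneg_right this hL₂.le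
    rw [sub_mul, div_mul_cancel₀ _ hL₂.ne'] at h
    linarith
  have habs : (0:ℝ) ≤ |τ₁ - τ₂| := abs_nonneg _
  have hnn : (0:ℝ) ≤ ‖xhat τ₁ - xhat τ₂‖ := norm_nonneg _
  have hτ2s : τ₂ ≤ τs := h2s
  nlinarith [mul_le_mul_of_nonneg_right hτ2s (mul_nonneg hL₁.le habs),
    mul_le_mul_of_nonneg_right hτ2L hnn]
end

section
/- Let g ∈ C² on a compact set containing the relevant trajectory, with ∇g Lipschitz with constant L_{∇g}. Suppose the continuous transversality bound 0 < α² ≤ ∇g(x*) · f(t*, x*) holds, the discrete vector field fᵗ satisfies the consistency bound ‖f(t*, x*) - fᵗ(t, y, s, z)‖ ≤ C₃ τᵖ whenever t, s ∈ B(t*, C₁τ₀) and y, z ∈ B(x*, C₂τ₀ᵖ), and ‖fᵗ‖ ≤ M₁ uniformly. Then for all sufficiently small τ > 0 and all x ∈ B(x*, C₂τᵖ), t, s ∈ B(t*, C₁τ), y, z ∈ B(x*, C₂τᵖ): ∇g(x) · fᵗ(t, y, s, z) ≥ α² - (C₃‖∇g(x*)‖ + C₂ L_{∇g} M₁) τᵖ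 > 0. -/
/-!
Write `⟪∇g(x), fᵗ⟫ = ⟪∇g(x*), f(t*, x*)⟫ - ⟪∇g(x*), f(t*, x*) - fᵗ⟫ + ⟪∇g(x) - ∇g(x*), fᵗ⟫`.
By Cauchy–Schwarz the last two terms are bounded in absolute value by `C₃ ‖∇g(x*)‖ τᵖ`
(consistency) and `L_{∇g} C₂ τᵖ M₁` (Lipschitz bound and `‖fᵗ‖ ≤ M₁`), so the transversality bound `α²` drops
by at most `(C₃ ‖∇g(x*)‖ + C₂ L_{∇g} M₁) τᵖ`, which is below `α²` for small `τ` since `τᵖ → 0`.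
-/

open Metric

theorem inner_sub_le_inner_of_norm_sub_le {E : Type*} [NormedAddCommGroup E]
    [InnerProductSpace ℝ E] {g g' f f' : E} {ε η M : ℝ}
    (hf : ‖f' - f‖ ≤ ε) (hg : ‖g - g'‖ ≤ η) (hM : ‖f‖ ≤ M) :
    inner ℝ g' f' - (‖g'‖ * ε + η * M) ≤ inner ℝ g f := by
  have hsplit : inner ℝ g f = inner ℝ g' f' - inner ℝ g' (f' - f) + inner ℝ (g - g') f := by
    simp only [inner_sub_left, inner_sub_right]; ring
  have h₁ : inner ℝ g' (f' - f) ≤ ‖g'‖ * ε :=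
    (real_inner_le_norm _ _).trans (mul_le_mul_of_nonneg_left hf (norm_nonneg _))
  have h₂ : -inner ℝ (g - g') f ≤ η * M :=
    (neg_le_abs _).trans <| (abs_real_inner_le_norm _ _).trans <|
      mul_le_mul hg hM (norm_nonneg _) ((norm_nonneg _).trans hg)
  linarith

theorem exists_forall_sub_mul_pow_pos {a : ℝ} (ha : 0 < a) (K : ℝ) {p : ℕ} (hp : p ≠ 0)
    {τ₀ : ℝ} (hτ₀ : 0 < τ₀) :
    ∃ τ₁, 0 < τ₁ ∧ τ₁ ≤ τ₀ ∧ ∀ τ, 0 < τ → τ ≤ τ₁ → 0 < a - K * τ ^ p := by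
  have hlim : Filter.Tendsto (fun τ : ℝ => a - K * τ ^ p) (nhds 0) (nhds a) := by
    have hcont : Continuous fun τ : ℝ => a - K * τ ^ p := by fun_prop
    simpa [zero_pow hp] using hcont.tendsto 0
  obtain ⟨ε, hε, hball⟩ := Metric.eventually_nhds_iff.mp (hlim.eventually_const_lt ha)
  refine ⟨min τ₀ (ε / 2), by positivity, min_le_left _ _, fun τ hτ hττ₁ => hball ?_⟩
  rw [Real.dist_0_eq_abs, abs_of_pos hτ]
  linarith [min_le_right τ₀ (ε / 2)]

theorem discrete_transversality_general {d : ℕ}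
    (G : EuclideanSpace ℝ (Fin d) → EuclideanSpace ℝ (Fin d))
    (fτ : ℝ → EuclideanSpace ℝ (Fin d) → ℝ → EuclideanSpace ℝ (Fin d) →
      EuclideanSpace ℝ (Fin d))
    (fstar : EuclideanSpace ℝ (Fin d)) (xstar : EuclideanSpace ℝ (Fin d))
    (tstar α LG C₁ C₂ C₃ M₁ τ₀ : ℝ) (p : ℕ)
    (hα : α ≠ 0) (hLG : 0 < LG) (hC₁ : 0 < C₁) (hC₂ : 0 < C₂)
    (hτ₀ : 0 < τ₀) (hp : 1 ≤ p)
    (hGLip : ∀ x y, ‖G x - G y‖ ≤ LG * ‖x - y‖)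
    (htrans : α ^ 2 ≤ (inner ℝ (G xstar) fstar : ℝ))
    (hcons : ∀ τ : ℝ, 0 < τ → τ ≤ τ₀ →
      ∀ t ∈ Metric.closedBall tstar (C₁ * τ₀),
      ∀ s ∈ Metric.closedBall tstar (C₁ * τ₀),
      ∀ y ∈ Metric.closedBall xstar (C₂ * τ₀ ^ p),
      ∀ z ∈ Metric.closedBall xstar (C₂ * τ₀ ^ p),
        ‖fstar - fτ t y s z‖ ≤ C₃ * τ ^ p)
    (hbd : ∀ t y s z, ‖fτ t y s z‖ ≤ M₁) :
    ∃ τ₁ : ℝ, 0 < τ₁ ∧ τ₁ ≤ τ₀ ∧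
      ∀ τ : ℝ, 0 < τ → τ ≤ τ₁ →
      ∀ x ∈ Metric.closedBall xstar (C₂ * τ ^ p),
      ∀ t ∈ Metric.closedBall tstar (C₁ * τ),
      ∀ s ∈ Metric.closedBall tstar (C₁ * τ),
      ∀ y ∈ Metric.closedBall xstar (C₂ * τ ^ p),
      ∀ z ∈ Metric.closedBall xstar (C₂ * τ ^ p),
        α ^ 2 - (C₃ * ‖G xstar‖ + C₂ * LG * M₁) * τ ^ p ≤ (inner ℝ (G x) (fτ t y s z) : ℝ) ∧
        0 < α ^ 2 - (C₃ * ‖G xstar‖ + C₂ * LG * M₁) * τ ^ p := by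
  obtain ⟨τ₁, hτ₁, hτ₁τ₀, hpos⟩ := exists_forall_sub_mul_pow_pos (by positivity : 0 < α ^ 2)
    (C₃ * ‖G xstar‖ + C₂ * LG * M₁) (Nat.one_le_iff_ne_zero.mp hp) hτ₀
  refine ⟨τ₁, hτ₁, hτ₁τ₀, fun τ hτ hττ₁ x hx t ht s hs y hy z hz => ⟨?_, hpos τ hτ hττ₁⟩⟩
  have hττ₀ : τ ≤ τ₀ := hττ₁.trans hτ₁τ₀
  have htime : closedBall tstar (C₁ * τ) ⊆ closedBall tstar (C₁ * τ₀) :=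
    closedBall_subset_closedBall (mul_le_mul_of_nonneg_left hττ₀ hC₁.le)
  have hspace : closedBall xstar (C₂ * τ ^ p) ⊆ closedBall xstar (C₂ * τ₀ ^ p) :=
    closedBall_subset_closedBall
      (mul_le_mul_of_nonneg_left (pow_le_pow_left₀ hτ.le hττ₀ p) hC₂.le)
  have hG : ‖G x - G xstar‖ ≤ LG * (C₂ * τ ^ p) :=
    (hGLip x xstar).trans (mul_le_mul_of_nonneg_left (mem_closedBall_iff_norm.mp hx) hLG.le)
  calc α ^ 2 - (C₃ * ‖G xstar‖ + C₂ * LG * M₁) * τ ^ p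
      = α ^ 2 - (‖G xstar‖ * (C₃ * τ ^ p) + LG * (C₂ * τ ^ p) * M₁) := by ring
    _ ≤ inner ℝ (G xstar) fstar - (‖G xstar‖ * (C₃ * τ ^ p) + LG * (C₂ * τ ^ p) * M₁) := by
      gcongr
    _ ≤ inner ℝ (G x) (fτ t y s z) :=
      inner_sub_le_inner_of_norm_sub_le
        (hcons τ hτ hττ₀ t (htime ht) s (htime hs) y (hspace hy) z (hspace hz)) hG
        (hbd t y s z)

theorem discrete_transversality {d : ℕ}
    (G : EuclideanSpace ℝ (Fin d) → EuclideanSpace ℝ (Fin d))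
    (fτ : ℝ → EuclideanSpace ℝ (Fin d) → ℝ → EuclideanSpace ℝ (Fin d) →
      EuclideanSpace ℝ (Fin d))
    (fstar : EuclideanSpace ℝ (Fin d)) (xstar : EuclideanSpace ℝ (Fin d))
    (tstar α LG C₁ C₂ C₃ M₁ τ₀ : ℝ) (p : ℕ)
    (hα : α ≠ 0) (hLG : 0 < LG) (hC₁ : 0 < C₁) (hC₂ : 0 < C₂) (hC₃ : 0 < C₃)
    (hM₁pos : 0 < M₁) (hτ₀ : 0 < τ₀) (hp : 1 ≤ p)
    (hGLip : ∀ x y, ‖G x - G y‖ ≤ LG * ‖x - y‖)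
    (htrans : α ^ 2 ≤ (inner ℝ (G xstar) fstar : ℝ))
    (hcons : ∀ τ : ℝ, 0 < τ → τ ≤ τ₀ →
      ∀ t ∈ Metric.closedBall tstar (C₁ * τ₀),
      ∀ s ∈ Metric.closedBall tstar (C₁ * τ₀),
      ∀ y ∈ Metric.closedBall xstar (C₂ * τ₀ ^ p),
      ∀ z ∈ Metric.closedBall xstar (C₂ * τ₀ ^ p),
        ‖fstar - fτ t y s z‖ ≤ C₃ * τ ^ p)
    (hbd : ∀ t y s z, ‖fτ t y s z‖ ≤ M₁) :
    ∃ τ₁ : ℝ, 0 < τ₁ ∧ τ₁ ≤ τ₀ ∧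
      ∀ τ : ℝ, 0 < τ → τ ≤ τ₁ →
      ∀ x ∈ Metric.closedBall xstar (C₂ * τ ^ p),
      ∀ t ∈ Metric.closedBall tstar (C₁ * τ),
      ∀ s ∈ Metric.closedBall tstar (C₁ * τ),
      ∀ y ∈ Metric.closedBall xstar (C₂ * τ ^ p),
      ∀ z ∈ Metric.closedBall xstar (C₂ * τ ^ p),
        α ^ 2 - (C₃ * ‖G xstar‖ + C₂ * LG * M₁) * τ ^ p ≤ (inner ℝ (G x) (fτ t y s z) : ℝ) ∧
        0 < α ^ 2 - (C₃ * ‖G xstar‖ + C₂ * LG * M₁) * τ ^ p :=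
  discrete_transversality_general G fτ fstar xstar tstar α LG C₁ C₂ C₃ M₁ τ₀ p hα hLG hC₁ hC₂ hτ₀ hp
    hGLip htrans hcons hbd
end

section
/- Let g : ℝᵈ → ℝ be C² and Lipschitz with constant L_g. Suppose x̂*, x(t) ∈ ℝᵈ satisfy x̂* - x(t) = (t̂* - t) v for some vector v with ∇g(x̂*) · v ≥ α̂² > 0, g(x̂*) = 0, and |½ v · H_g(ξ) v| ≤ M̂ for all ξ on the segment between x(t) and x̂*. Then for t < t̂*: |t - t̂*| ≤ (M̂(t - t̂*)² + L_g ‖x(t) - x̂*‖) / α̂². -/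
/-!
Since `x(t) - x̂* = (t - t̂*) v`, Taylor's theorem along the segment from `x̂*` to `x(t)`, with the
Hessian bound, gives `|g(x(t)) - g(x̂*) - (t - t̂*) ∇g(x̂*)·v| ≤ M̂ (t - t̂*)²`. With `g(x̂*) = 0`,
the transversality `∇g(x̂*)·v ≥ α̂²` and the Lipschitz bound `-g(x(t)) ≤ L_g ‖x(t) - x̂*‖`, this
rearranges to `(t̂* - t) α̂² ≤ M̂ (t - t̂*)² + L_g ‖x(t) - x̂*‖`.
-/

open InnerProductSpace Set
open scoped RealInnerProductSpace

theorem norm_sub_sub_smul_deriv_le {E : Type*} [NormedAddCommGroup E] [NormedSpace ℝ E]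
    {f f' f'' : ℝ → E} {a b K : ℝ} (hab : a ≤ b)
    (hf : ∀ s ∈ Icc a b, HasDerivAt f (f' s) s)
    (hf' : ∀ s ∈ Icc a b, HasDerivAt f' (f'' s) s)
    (hK : ∀ s ∈ Icc a b, ‖f'' s‖ ≤ K) :
    ‖f b - f a - (b - a) • f' a‖ ≤ K / 2 * (b - a) ^ 2 := by
  have hf'_lip : ∀ s ∈ Icc a b, ‖f' s - f' a‖ ≤ K * (s - a) :=
    norm_image_sub_le_of_norm_deriv_le_segment' (fun s hs => (hf' s hs).hasDerivWithinAt)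
      fun s hs => hK s (Ico_subset_Icc_self hs)
  have hrem : ∀ s ∈ Icc a b,
      HasDerivAt (fun s => f s - f a - (s - a) • f' a) (f' s - f' a) s := fun s hs => by
    simpa using ((hf s hs).sub_const (f a)).fun_sub
      (((hasDerivAt_id s).sub_const a).smul_const (f' a))
  have hbound : ∀ s, HasDerivAt (fun s => K / 2 * (s - a) ^ 2) (K * (s - a)) s := fun s =>
    ((((hasDerivAt_id' s).sub_const a).fun_pow 2).const_mul (K / 2)).congr_deriv
      (by ring : K / 2 * (2 * (s - a) ^ (2 - 1) * 1) = K * (s - a))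
  refine image_norm_le_of_norm_deriv_right_le_deriv_boundary
    (fun s hs => (hrem s hs).continuousAt.continuousWithinAt)
    (fun s hs => (hrem s (Ico_subset_Icc_self hs)).hasDerivWithinAt) (by simp) hbound
    (fun s hs => hf'_lip s (Ico_subset_Icc_self hs)) (right_mem_Icc.2 hab)

theorem HasFDerivAt.hasDerivAt_comp_line {E F : Type*} [NormedAddCommGroup E] [NormedSpace ℝ E]
    [NormedAddCommGroup F] [NormedSpace ℝ F] {f : E → F} {f' : E →L[ℝ] F} {x w : E} {s : ℝ}
    (hf : HasFDerivAt f f' (x + s • w)) :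
    HasDerivAt (fun s : ℝ => f (x + s • w)) (f' w) s :=
  hf.comp_hasDerivAt s (by simpa using ((hasDerivAt_id s).smul_const w).const_add x)

section Gradient

variable {E : Type*} [NormedAddCommGroup E] [InnerProductSpace ℝ E] [CompleteSpace E]
  {g : E → ℝ}

theorem ContDiff.differentiable_gradient (hg : ContDiff ℝ 2 g) : Differentiable ℝ (gradient g) :=
  (toDual ℝ E).symm.differentiable.comp
    ((hg.fderiv_right (m := 1) le_rfl).differentiable one_ne_zero)

theorem ContDiff.abs_sub_sub_inner_gradient_le (hg : ContDiff ℝ 2 g) {x w : E} {K : ℝ}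
    (hK : ∀ s ∈ Icc (0 : ℝ) 1, |⟪fderiv ℝ (gradient g) (x + s • w) w, w⟫_ℝ| ≤ K) :
    |g (x + w) - g x - ⟪gradient g x, w⟫_ℝ| ≤ K / 2 := by
  have hφ : ∀ s : ℝ, HasDerivAt (fun s : ℝ => g (x + s • w)) (⟪gradient g (x + s • w), w⟫_ℝ) s :=
    fun s => by
      simpa using ((hg.differentiable two_ne_zero) (x + s • w)).hasFDerivAt.hasDerivAt_comp_line
  have hφ' : ∀ s : ℝ, HasDerivAt (fun s : ℝ => ⟪gradient g (x + s • w), w⟫_ℝ)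
      (⟪fderiv ℝ (gradient g) (x + s • w) w, w⟫_ℝ) s := fun s => by
    simpa using (hg.differentiable_gradient (x + s • w)).hasFDerivAt.hasDerivAt_comp_line.inner ℝ
      (hasDerivAt_const s w)
  simpa [Real.norm_eq_abs] using norm_sub_sub_smul_deriv_le zero_le_one (fun s _ => hφ s)
    (fun s _ => hφ' s) hK

end Gradient

theorem discrete_crossing_time_estimate_general {d : ℕ}
    (g : EuclideanSpace ℝ (Fin d) → ℝ)
    (xhat xt v : EuclideanSpace ℝ (Fin d))
    (t that Mhat Lg αhat : ℝ)
    (hgC2 : ContDiff ℝ 2 g)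
    (hαhat : 0 < αhat ^ 2)
    (hLip : ∀ y z, |g y - g z| ≤ Lg * ‖y - z‖)
    (hsec : xhat - xt = (that - t) • v)
    (htrans : αhat ^ 2 ≤ (inner ℝ (gradient g xhat) v : ℝ))
    (hg0 : g xhat = 0)
    (hHess : ∀ s ∈ Set.Icc (0 : ℝ) 1,
      |(1 / 2 : ℝ) * (inner ℝ (fderiv ℝ (gradient g) (xt + s • (xhat - xt)) v) v : ℝ)| ≤ Mhat)
    (hlt : t < that) :
    |t - that| ≤ (Mhat * (t - that) ^ 2 + Lg * ‖xt - xhat‖) / αhat ^ 2 := by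
  have hw : xt - xhat = (t - that) • v := by
    rw [← neg_sub, hsec, ← neg_smul, neg_sub]
  have hHess_segment : ∀ s ∈ Icc (0 : ℝ) 1,
      |⟪fderiv ℝ (gradient g) (xhat + s • (xt - xhat)) (xt - xhat), xt - xhat⟫_ℝ|
        ≤ 2 * Mhat * (t - that) ^ 2 := fun s hs => by
    have hpt : xhat + s • (xt - xhat) = xt + (1 - s) • (xhat - xt) := by module
    have h := hHess (1 - s) ⟨by linarith [hs.2], by linarith [hs.1]⟩
    rw [abs_mul, abs_of_pos one_half_pos] at h
    rw [hpt, hw, map_smul, real_inner_smul_left, real_inner_smul_right, ← mul_assoc, ← sq, abs_mul,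
      abs_sq]
    nlinarith [sq_nonneg (t - that)]
  have htaylor := hgC2.abs_sub_sub_inner_gradient_le hHess_segment
  rw [add_sub_cancel, hg0, hw, real_inner_smul_right] at htaylor
  have hgxt := hLip xhat xt
  rw [hg0, norm_sub_rev] at hgxt
  have hslope : (that - t) * αhat ^ 2 ≤ (that - t) * ⟪gradient g xhat, v⟫_ℝ :=
    mul_le_mul_of_nonneg_left htrans (sub_nonneg.2 hlt.le)
  rw [abs_of_neg (sub_neg.2 hlt), le_div_iff₀ hαhat]
  linarith [abs_le.1 htaylor, abs_le.1 hgxt]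

theorem discrete_crossing_time_estimate {d : ℕ}
    (g : EuclideanSpace ℝ (Fin d) → ℝ)
    (xhat xt v : EuclideanSpace ℝ (Fin d))
    (t that Mhat Lg αhat : ℝ)
    (hgC2 : ContDiff ℝ 2 g)
    (hαhat : 0 < αhat ^ 2) (hMhat : 0 < Mhat) (hLg : 0 < Lg)
    (hLip : ∀ y z, |g y - g z| ≤ Lg * ‖y - z‖)
    (hsec : xhat - xt = (that - t) • v)
    (htrans : αhat ^ 2 ≤ (inner ℝ (gradient g xhat) v : ℝ))
    (hg0 : g xhat = 0)
    (hHess : ∀ s ∈ Set.Icc (0 : ℝ) 1,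
      |(1 / 2 : ℝ) * (inner ℝ (fderiv ℝ (gradient g) (xt + s • (xhat - xt)) v) v : ℝ)| ≤ Mhat)
    (hlt : t < that) :
    |t - that| ≤ (Mhat * (t - that) ^ 2 + Lg * ‖xt - xhat‖) / αhat ^ 2 :=
  discrete_crossing_time_estimate_general g xhat xt v t that Mhat Lg αhat hgC2 hαhat hLip hsec
    htrans hg0 hHess hlt
end

section
/- Suppose |e| ≤ τ (where e = t* - t̂*) satisfies the quadratic inequality 0 ≤ M e² - α² |e| + L(Cτᵖ) with M, α, L, C > 0, p ≥ 1, and τ small enough that L C τᵖ < α⁴/(4M) and τ < r₊ where r₊ = (α² + √(α⁴ - 4M L C τᵖ))/(2M). Then |e| ≤ L C τᵖ / α² + O(τ^{2p}); in particular |e| = O(τᵖ) as τ → 0. -/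
set_option maxHeartbeats 1000000


theorem crossing_time_error_order (M α L C τ e : ℝ) (p : ℕ)
    (hM : 0 < M) (hα : 0 < α) (hL : 0 < L) (hC : 0 < C) (hp : 1 ≤ p)
    (hτ : 0 < τ) (he : |e| ≤ τ)
    (hquad : 0 ≤ M * e ^ 2 - α ^ 2 * |e| + L * (C * τ ^ p))
    (hsmall : L * C * τ ^ p < α ^ 4 / (4 * M))
    (hτlt : τ < (α ^ 2 + Real.sqrt (α ^ 4 - 4 * M * L * C * τ ^ p)) / (2 * M)) :
    |e| ≤ (L * C * τ ^ p / α ^ 2) * (1 / (1 - 2 * M * L * C * τ ^ p / α ^ 4)) ∧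
    |e| ≤ 2 * L * C / α ^ 2 * τ ^ p := by
  set x := |e| with hx
  have hx0 : 0 ≤ x := abs_nonneg e
  have hxsq : x ^ 2 = e ^ 2 := sq_abs e
  set s := Real.sqrt (α ^ 4 - 4 * M * L * C * τ ^ p) with hs
  have hτp : 0 < τ ^ p := pow_pos hτ p
  have hsm : L * C * τ ^ p * (4 * M) < α ^ 4 :=
    (lt_div_iff₀ (by positivity)).mp hsmall
  have hD : 0 ≤ α ^ 4 - 4 * M * L * C * τ ^ p := by nlinarith
  have hs0 : 0 ≤ s := Real.sqrt_nonneg _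
  have hs2 : s ^ 2 = α ^ 4 - 4 * M * L * C * τ ^ p := Real.sq_sqrt hD
  have hxlt : x < (α ^ 2 + s) / (2 * M) := lt_of_le_of_lt he hτlt
  have hxlt' : 2 * M * x < α ^ 2 + s := by
    have := (lt_div_iff₀ (by positivity : (0:ℝ) < 2 * M)).mp hxlt
    linarith
  have hα2 : 0 < α ^ 2 := by positivity
  -- x ≤ smaller root
  have hroot : 2 * M * x ≤ α ^ 2 - s := by
    by_contra h
    push_neg at h
    have h1 : 0 < 2 * M * x - (α ^ 2 - s) := by linarith
    have h2 : 0 < (α ^ 2 + s) - 2 * M * x := by linarith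
    have hquad' : 0 ≤ M * x ^ 2 - α ^ 2 * x + L * (C * τ ^ p) := by
      rw [hxsq]; exact hquad
    nlinarith [mul_pos h1 h2,
      mul_nonneg (by positivity : (0:ℝ) ≤ 4 * M) hquad', hs2]
  have hkey : x * (α ^ 2 + s) ≤ 2 * (L * C * τ ^ p) := by
    have h4 : 2 * M * (x * (α ^ 2 + s)) ≤ 2 * M * (2 * (L * C * τ ^ p)) := by
      nlinarith [mul_le_mul_of_nonneg_right hroot
        (by positivity : (0:ℝ) ≤ α ^ 2 + s), hs2]
    exact le_of_mul_le_mul_left h4 (by positivity)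
  constructor
  · have hsle : s ≤ α ^ 2 := by nlinarith
    have hDs : α ^ 4 - 4 * M * L * C * τ ^ p ≤ α ^ 2 * s := by
      nlinarith [mul_le_mul_of_nonneg_right hsle hs0, hs2]
    have hpos2 : 0 < α ^ 4 - 2 * M * L * C * τ ^ p := by nlinarith
    have hfin : x * (α ^ 4 - 2 * M * L * C * τ ^ p) ≤ L * C * τ ^ p * α ^ 2 := by
      nlinarith [mul_le_mul_of_nonneg_right hkey hα2.le,
        mul_le_mul_of_nonneg_left hDs hx0]
    have hxle : x ≤ L * C * τ ^ p * α ^ 2 / (α ^ 4 - 2 * M * L * C * τ ^ p) := by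
      rw [le_div_iff₀ hpos2]; exact hfin
    have hden : 0 < 1 - 2 * M * L * C * τ ^ p / α ^ 4 := by
      rw [sub_pos, div_lt_one (by positivity)]; nlinarith
    have heq : (L * C * τ ^ p / α ^ 2) * (1 / (1 - 2 * M * L * C * τ ^ p / α ^ 4))
        = L * C * τ ^ p * α ^ 2 / (α ^ 4 - 2 * M * L * C * τ ^ p) := by
      have h1 : (α:ℝ) ≠ 0 := hα.ne'
      have h2 : α ^ 4 - 2 * M * L * C * τ ^ p ≠ 0 := hpos2.ne'
      have h3 : 1 - 2 * M * L * C * τ ^ p / α ^ 4 ≠ 0 := hden.ne'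
      field_simp
    rw [heq]; exact hxle
  · rw [div_mul_eq_mul_div, le_div_iff₀ hα2]
    nlinarith
end
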